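/- Take a_n = 1/(100 n³). Then for every bounded Lipschitz function f : [0,1) → ℂ, ∑_{n=1}^∞ ‖L_n f‖_Lip ≤ (1/2) ‖f‖_Lip, where (L_n f)(x) = v_n'(x) f(v_n(x)) + w_n'(x) f(w_n(x)). -/

import Mathlib

/-!
Since `v_n' + w_n' = 4 a_n`, the sup norm of `L_n f` is at most `4 a_n sup |f|`. For the
Lipschitz constant, the same identity gives
`L_n f(x) - L_n f(y) = (v_n'(x) - v_n'(y)) (f(v_n x) - f(w_n x)) + v_n'(y) Δf + w_n'(y) Δf`:
the oscillating factor costs `4π n⁴ a_n`, but it multiplies `f(v_n x) - f(w_n x)`, which is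
`O(a_n Lip f)` because `v_n x` and `w_n x` lie in an interval of length `5 a_n`. Hence
`‖L_n f‖_Lip ≤ (4 a_n + (20π n⁴ + 12) a_n²) ‖f‖_Lip`, which for `a_n = 1/(100 n³)` is at most
`‖f‖_Lip / (10 n²)`, and `∑ 1/n² = π²/6 < 5`.
-/

open MeasureTheory Set Filter

noncomputable section

namespace Gouezel

/-- `b a n = 4 * ∑_{k=1}^n a_k` (left endpoints of the intervals `I_n`). -/
def b (a : ℕ → ℝ) (n : ℕ) : ℝ := 4 * ∑ k ∈ Finset.range n, a (k + 1)

/-- `b_∞ = 4 * ∑_{n=1}^∞ a_n`. -/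
def binf (a : ℕ → ℝ) : ℝ := 4 * ∑' n : ℕ, a (n + 1)

/-- The length `|J| = 1 - b_∞` of the interval `J = [b_∞, 1)`. -/
def lenJ (a : ℕ → ℝ) : ℝ := 1 - binf a

/-- `v_n'(x) = a_n (1 + 2 cos²(2π n⁴ x))`. -/
def vd (a : ℕ → ℝ) (n : ℕ) (x : ℝ) : ℝ :=
  a n * (1 + 2 * Real.cos (2 * Real.pi * (n : ℝ) ^ 4 * x) ^ 2)

/-- `w_n'(x) = a_n (1 + 2 sin²(2π n⁴ x))`. -/
def wd (a : ℕ → ℝ) (n : ℕ) (x : ℝ) : ℝ :=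
  a n * (1 + 2 * Real.sin (2 * Real.pi * (n : ℝ) ^ 4 * x) ^ 2)

/-- The inverse branch `v_n(x) = b_{n-1} + ∫_0^x v_n'(t) dt`. -/
def v (a : ℕ → ℝ) (n : ℕ) (x : ℝ) : ℝ := b a (n - 1) + ∫ t in (0:ℝ)..x, vd a n t

/-- The inverse branch `w_n(x) = b_{n-1} + 2 a_n + ∫_0^x w_n'(t) dt`. -/
def w (a : ℕ → ℝ) (n : ℕ) (x : ℝ) : ℝ :=
  b a (n - 1) + 2 * a n + ∫ t in (0:ℝ)..x, wd a n t

/-- The affine inverse branches `u_j(x) = b_∞ + (j-1)|J|/N + (|J|/N) x`, `1 ≤ j ≤ N`. -/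
def u (a : ℕ → ℝ) (N : ℕ) (j : ℕ) (x : ℝ) : ℝ :=
  binf a + ((j : ℝ) - 1) * (lenJ a / N) + (lenJ a / N) * x

/-- The transfer operator on complex-valued functions. -/
def L (a : ℕ → ℝ) (N : ℕ) (f : ℝ → ℂ) (x : ℝ) : ℂ :=
  (∑' n : ℕ, ((vd a (n + 1) x : ℂ) * f (v a (n + 1) x)
      + (wd a (n + 1) x : ℂ) * f (w a (n + 1) x)))
    + ((lenJ a / (N : ℝ) : ℝ) : ℂ) * ∑ j ∈ Finset.range N, f (u a N (j + 1) x)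

/-- The transfer operator on real-valued functions. -/
def LR (a : ℕ → ℝ) (N : ℕ) (f : ℝ → ℝ) (x : ℝ) : ℝ :=
  (∑' n : ℕ, (vd a (n + 1) x * f (v a (n + 1) x) + wd a (n + 1) x * f (w a (n + 1) x)))
    + (lenJ a / N) * ∑ j ∈ Finset.range N, f (u a N (j + 1) x)

/-- The part `L_n` of the transfer operator coming from the branches `v_n, w_n`. -/
def Ln (a : ℕ → ℝ) (n : ℕ) (f : ℝ → ℂ) (x : ℝ) : ℂ :=
  (vd a n x : ℂ) * f (v a n x) + (wd a n x : ℂ) * f (w a n x)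

/-- Sup norm of `f` on `[0,1)`. -/
def supNorm (f : ℝ → ℂ) : ℝ := ⨆ x : Ico (0:ℝ) 1, ‖f x.1‖

/-- Best Lipschitz constant of `f` on `[0,1)` (the term at `x = y` is `0/0 = 0`). -/
def lipConst (f : ℝ → ℂ) : ℝ :=
  ⨆ p : Ico (0:ℝ) 1 × Ico (0:ℝ) 1, ‖f p.1.1 - f p.2.1‖ / |p.1.1 - p.2.1|

/-- Lipschitz norm `‖f‖_Lip = sup|f| + Lip(f)` on `[0,1)`. -/
def lipNorm (f : ℝ → ℂ) : ℝ := supNorm f + lipConst f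

/-- `f` is bounded and Lipschitz on `[0,1)`. -/
def BddLip (f : ℝ → ℂ) : Prop :=
  ∃ K : ℝ, (∀ x ∈ Ico (0:ℝ) 1, ‖f x‖ ≤ K) ∧
    ∀ x ∈ Ico (0:ℝ) 1, ∀ y ∈ Ico (0:ℝ) 1, ‖f x - f y‖ ≤ K * |x - y|

/-- The specific choice `a_n = 1/(100 n³)`. -/
def aa (n : ℕ) : ℝ := 1 / (100 * (n : ℝ) ^ 3)

/-- Standing hypotheses on the sequence `(a_n)`: positivity and `∑ a_n < 1/4`. -/
def StdHyp (a : ℕ → ℝ) : Prop :=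
  (∀ n : ℕ, 1 ≤ n → 0 < a n) ∧ Summable (fun n : ℕ => a (n + 1)) ∧
    (∑' n : ℕ, a (n + 1)) < 1 / 4

/-- `T : [0,1) → [0,1)` has the maps `v_n, w_n` (`n ≥ 1`) and `u_j` (`1 ≤ j ≤ N`)
as inverse branches. -/
def InverseBranches (a : ℕ → ℝ) (N : ℕ) (T : ℝ → ℝ) : Prop :=
  MapsTo T (Ico (0:ℝ) 1) (Ico (0:ℝ) 1) ∧
    ∀ x ∈ Ico (0:ℝ) 1,
      (∀ n : ℕ, 1 ≤ n → T (v a n x) = x ∧ T (w a n x) = x) ∧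
      (∀ j : ℕ, 1 ≤ j → j ≤ N → T (u a N j x) = x)

section LipschitzNorm

lemma supNorm_nonneg (f : ℝ → ℂ) : 0 ≤ supNorm f :=
  Real.iSup_nonneg fun _ => norm_nonneg _

lemma lipConst_nonneg (f : ℝ → ℂ) : 0 ≤ lipConst f :=
  Real.iSup_nonneg fun _ => div_nonneg (norm_nonneg _) (abs_nonneg _)

lemma lipNorm_nonneg (f : ℝ → ℂ) : 0 ≤ lipNorm f :=
  add_nonneg (supNorm_nonneg f) (lipConst_nonneg f)

lemma supNorm_le {g : ℝ → ℂ} {C : ℝ} (hC : 0 ≤ C) (h : ∀ x ∈ Ico (0:ℝ) 1, ‖g x‖ ≤ C) :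
    supNorm g ≤ C :=
  Real.iSup_le (fun x => h x.1 x.2) hC

lemma lipConst_le {g : ℝ → ℂ} {C : ℝ} (hC : 0 ≤ C)
    (h : ∀ x ∈ Ico (0:ℝ) 1, ∀ y ∈ Ico (0:ℝ) 1, ‖g x - g y‖ ≤ C * |x - y|) :
    lipConst g ≤ C := by
  refine Real.iSup_le (fun ⟨⟨x, hx⟩, ⟨y, hy⟩⟩ => ?_) hC
  rcases eq_or_ne x y with rfl | hxy
  · simpa using hC
  · exact div_le_of_le_mul₀ (abs_nonneg _) hC (h x hx y hy)

variable {f : ℝ → ℂ} {x y : ℝ}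

lemma BddLip.norm_le_supNorm (hf : BddLip f) (hx : x ∈ Ico (0:ℝ) 1) : ‖f x‖ ≤ supNorm f := by
  obtain ⟨K, hK, -⟩ := hf
  exact le_ciSup (f := fun z : Ico (0:ℝ) 1 => ‖f z.1‖)
    ⟨K, by rintro _ ⟨z, rfl⟩; exact hK z.1 z.2⟩ ⟨x, hx⟩

lemma BddLip.norm_sub_le_lipConst_mul (hf : BddLip f) (hx : x ∈ Ico (0:ℝ) 1)
    (hy : y ∈ Ico (0:ℝ) 1) : ‖f x - f y‖ ≤ lipConst f * |x - y| := by
  rcases eq_or_ne x y with rfl | hxy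
  · simp
  obtain ⟨K, hK, hKlip⟩ := hf
  have hK0 : 0 ≤ K := (norm_nonneg _).trans (hK x hx)
  have hbdd : BddAbove (range fun p : Ico (0:ℝ) 1 × Ico (0:ℝ) 1 =>
      ‖f p.1.1 - f p.2.1‖ / |p.1.1 - p.2.1|) := by
    refine ⟨K, ?_⟩
    rintro _ ⟨⟨⟨s, hs⟩, ⟨t, ht⟩⟩, rfl⟩
    exact div_le_of_le_mul₀ (abs_nonneg _) hK0 (hKlip s hs t ht)
  have hpos : 0 < |x - y| := abs_pos.mpr (sub_ne_zero.mpr hxy)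
  rw [← div_le_iff₀ hpos]
  exact le_ciSup hbdd ⟨⟨x, hx⟩, ⟨y, hy⟩⟩

end LipschitzNorm

section Branches

variable {a : ℕ → ℝ} {n : ℕ}

lemma vd_eq (a : ℕ → ℝ) (n : ℕ) (x : ℝ) :
    vd a n x = a n * (2 + Real.cos (4 * Real.pi * (n : ℝ) ^ 4 * x)) := by
  rw [vd, Real.cos_sq]
  ring_nf

lemma wd_eq (a : ℕ → ℝ) (n : ℕ) (x : ℝ) :
    wd a n x = a n * (2 - Real.cos (4 * Real.pi * (n : ℝ) ^ 4 * x)) := by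
  rw [wd, Real.sin_sq, Real.cos_sq]
  ring_nf

lemma vd_add_wd (a : ℕ → ℝ) (n : ℕ) (x : ℝ) : vd a n x + wd a n x = 4 * a n := by
  rw [vd_eq, wd_eq]
  ring

lemma vd_mem_Icc (ha : 0 ≤ a n) (x : ℝ) : vd a n x ∈ Icc 0 (3 * a n) := by
  rw [vd_eq]
  constructor <;> nlinarith [Real.neg_one_le_cos (4 * Real.pi * (n : ℝ) ^ 4 * x),
    Real.cos_le_one (4 * Real.pi * (n : ℝ) ^ 4 * x)]

lemma wd_mem_Icc (ha : 0 ≤ a n) (x : ℝ) : wd a n x ∈ Icc 0 (3 * a n) := by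
  rw [wd_eq]
  constructor <;> nlinarith [Real.neg_one_le_cos (4 * Real.pi * (n : ℝ) ^ 4 * x),
    Real.cos_le_one (4 * Real.pi * (n : ℝ) ^ 4 * x)]

lemma abs_vd_sub_vd_le (ha : 0 ≤ a n) (x y : ℝ) :
    |vd a n x - vd a n y| ≤ 4 * Real.pi * (n : ℝ) ^ 4 * a n * |x - y| := by
  have hcos := Real.abs_cos_sub_cos_le (4 * Real.pi * (n : ℝ) ^ 4 * x)
    (4 * Real.pi * (n : ℝ) ^ 4 * y)
  rw [← mul_sub, abs_mul, abs_of_nonneg (by positivity : (0:ℝ) ≤ 4 * Real.pi * (n : ℝ) ^ 4)]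
    at hcos
  calc |vd a n x - vd a n y|
      = a n * |Real.cos (4 * Real.pi * (n : ℝ) ^ 4 * x)
          - Real.cos (4 * Real.pi * (n : ℝ) ^ 4 * y)| := by
        rw [vd_eq, vd_eq, ← mul_sub, abs_mul, abs_of_nonneg ha]
        ring_nf
    _ ≤ a n * (4 * Real.pi * (n : ℝ) ^ 4 * |x - y|) := mul_le_mul_of_nonneg_left hcos ha
    _ = 4 * Real.pi * (n : ℝ) ^ 4 * a n * |x - y| := by ring

lemma abs_integral_le_of_mem_Icc {g : ℝ → ℝ} {M : ℝ} (hg : ∀ t, g t ∈ Icc 0 M) (x y : ℝ) :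
    |∫ t in y..x, g t| ≤ M * |x - y| := by
  have := intervalIntegral.norm_integral_le_of_norm_le_const (a := y) (b := x) (f := g)
    (C := M) fun t _ => by rw [Real.norm_eq_abs, abs_of_nonneg (hg t).1]; exact (hg t).2
  rwa [Real.norm_eq_abs] at this

lemma integral_mem_Icc_of_mem_Ico {g : ℝ → ℝ} {M : ℝ} (hg : ∀ t, g t ∈ Icc 0 M) {x : ℝ}
    (hx : x ∈ Ico (0:ℝ) 1) : (∫ t in (0:ℝ)..x, g t) ∈ Icc 0 M := by
  have hM : 0 ≤ M := (hg 0).1.trans (hg 0).2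
  refine ⟨intervalIntegral.integral_nonneg hx.1 fun t _ => (hg t).1, ?_⟩
  calc (∫ t in (0:ℝ)..x, g t) ≤ M * |x - 0| :=
        (le_abs_self _).trans (abs_integral_le_of_mem_Icc hg x 0)
    _ ≤ M := by rw [sub_zero, abs_of_nonneg hx.1]; nlinarith [hx.2]

lemma v_sub_v (a : ℕ → ℝ) (n : ℕ) (x y : ℝ) : v a n x - v a n y = ∫ t in y..x, vd a n t := by
  have hint : ∀ s t : ℝ, IntervalIntegrable (vd a n) volume s t := fun s t =>
    (by unfold vd; fun_prop : Continuous (vd a n)).intervalIntegrable s t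
  rw [v, v, add_sub_add_left_eq_sub,
    intervalIntegral.integral_interval_sub_left (hint 0 x) (hint 0 y)]

lemma w_sub_w (a : ℕ → ℝ) (n : ℕ) (x y : ℝ) : w a n x - w a n y = ∫ t in y..x, wd a n t := by
  have hint : ∀ s t : ℝ, IntervalIntegrable (wd a n) volume s t := fun s t =>
    (by unfold wd; fun_prop : Continuous (wd a n)).intervalIntegrable s t
  rw [w, w, add_sub_add_left_eq_sub,
    intervalIntegral.integral_interval_sub_left (hint 0 x) (hint 0 y)]

lemma abs_v_sub_v_le (ha : 0 ≤ a n) (x y : ℝ) : |v a n x - v a n y| ≤ 3 * a n * |x - y| := by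
  rw [v_sub_v]
  exact abs_integral_le_of_mem_Icc (vd_mem_Icc ha) x y

lemma abs_w_sub_w_le (ha : 0 ≤ a n) (x y : ℝ) : |w a n x - w a n y| ≤ 3 * a n * |x - y| := by
  rw [w_sub_w]
  exact abs_integral_le_of_mem_Icc (wd_mem_Icc ha) x y

lemma v_mem_Icc (ha : 0 ≤ a n) {x : ℝ} (hx : x ∈ Ico (0:ℝ) 1) :
    v a n x ∈ Icc (b a (n - 1)) (b a (n - 1) + 3 * a n) := by
  obtain ⟨h0, h1⟩ := integral_mem_Icc_of_mem_Ico (vd_mem_Icc ha) hx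
  exact ⟨by rw [v]; linarith, by rw [v]; linarith⟩

lemma w_mem_Icc (ha : 0 ≤ a n) {x : ℝ} (hx : x ∈ Ico (0:ℝ) 1) :
    w a n x ∈ Icc (b a (n - 1) + 2 * a n) (b a (n - 1) + 5 * a n) := by
  obtain ⟨h0, h1⟩ := integral_mem_Icc_of_mem_Ico (wd_mem_Icc ha) hx
  exact ⟨by rw [w]; linarith, by rw [w]; linarith⟩

lemma abs_v_sub_w_le (ha : 0 ≤ a n) {x : ℝ} (hx : x ∈ Ico (0:ℝ) 1) :
    |v a n x - w a n x| ≤ 5 * a n := by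
  obtain ⟨hv0, hv1⟩ := v_mem_Icc ha hx
  obtain ⟨hw0, hw1⟩ := w_mem_Icc ha hx
  rw [abs_le]
  constructor <;> linarith

lemma b_nonneg (ha : ∀ k, 0 ≤ a k) (n : ℕ) : 0 ≤ b a n :=
  mul_nonneg (by norm_num) (Finset.sum_nonneg fun k _ => ha _)

lemma mapsTo_v (ha : ∀ k, 0 ≤ a k) (hn : b a (n - 1) + 5 * a n < 1) :
    MapsTo (v a n) (Ico 0 1) (Ico 0 1) := fun x hx => by
  obtain ⟨h0, h1⟩ := v_mem_Icc (ha n) hx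
  have := b_nonneg ha (n - 1)
  have := ha n
  constructor <;> linarith

lemma mapsTo_w (ha : ∀ k, 0 ≤ a k) (hn : b a (n - 1) + 5 * a n < 1) :
    MapsTo (w a n) (Ico 0 1) (Ico 0 1) := fun x hx => by
  obtain ⟨h0, h1⟩ := w_mem_Icc (ha n) hx
  have := b_nonneg ha (n - 1)
  have := ha n
  constructor <;> linarith

end Branches

section TransferOperator

variable {a : ℕ → ℝ} {n : ℕ} {f : ℝ → ℂ}

lemma supNorm_Ln_le (ha : 0 ≤ a n) (hv : MapsTo (v a n) (Ico 0 1) (Ico 0 1))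
    (hw : MapsTo (w a n) (Ico 0 1) (Ico 0 1)) (hf : BddLip f) :
    supNorm (Ln a n f) ≤ 4 * a n * supNorm f := by
  refine supNorm_le (mul_nonneg (by positivity) (supNorm_nonneg f)) fun x hx => ?_
  obtain ⟨hvd, -⟩ := vd_mem_Icc ha x
  obtain ⟨hwd, -⟩ := wd_mem_Icc ha x
  calc ‖Ln a n f x‖ ≤ vd a n x * ‖f (v a n x)‖ + wd a n x * ‖f (w a n x)‖ := by
        refine (norm_add_le _ _).trans_eq ?_
        rw [norm_mul, norm_mul, Complex.norm_real, Complex.norm_real, Real.norm_of_nonneg hvd,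
          Real.norm_of_nonneg hwd]
    _ ≤ vd a n x * supNorm f + wd a n x * supNorm f := by
        gcongr
        exacts [hf.norm_le_supNorm (hv hx), hf.norm_le_supNorm (hw hx)]
    _ = 4 * a n * supNorm f := by rw [← add_mul, vd_add_wd]

lemma Ln_sub_Ln (a : ℕ → ℝ) (n : ℕ) (f : ℝ → ℂ) (x y : ℝ) :
    Ln a n f x - Ln a n f y
      = ((vd a n x - vd a n y : ℝ) : ℂ) * (f (v a n x) - f (w a n x))
        + (vd a n y : ℂ) * (f (v a n x) - f (v a n y))
        + (wd a n y : ℂ) * (f (w a n x) - f (w a n y)) := by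
  have hsum : (vd a n x : ℂ) + wd a n x = (vd a n y : ℂ) + wd a n y := by
    exact_mod_cast (vd_add_wd a n x).trans (vd_add_wd a n y).symm
  simp only [Ln]
  push_cast
  linear_combination f (w a n x) * hsum

lemma lipConst_Ln_le (ha : 0 ≤ a n) (hv : MapsTo (v a n) (Ico 0 1) (Ico 0 1))
    (hw : MapsTo (w a n) (Ico 0 1) (Ico 0 1)) (hf : BddLip f) :
    lipConst (Ln a n f) ≤ (20 * Real.pi * (n : ℝ) ^ 4 + 12) * a n ^ 2 * lipConst f := by
  have hL := lipConst_nonneg f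
  refine lipConst_le (by positivity) fun x hx y hy => ?_
  obtain ⟨hvd, -⟩ := vd_mem_Icc ha y
  obtain ⟨hwd, -⟩ := wd_mem_Icc ha y
  have hvw : ‖f (v a n x) - f (w a n x)‖ ≤ lipConst f * (5 * a n) :=
    (hf.norm_sub_le_lipConst_mul (hv hx) (hw hx)).trans (by gcongr; exact abs_v_sub_w_le ha hx)
  have hvv : ‖f (v a n x) - f (v a n y)‖ ≤ lipConst f * (3 * a n * |x - y|) :=
    (hf.norm_sub_le_lipConst_mul (hv hx) (hv hy)).trans (by gcongr; exact abs_v_sub_v_le ha x y)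
  have hww : ‖f (w a n x) - f (w a n y)‖ ≤ lipConst f * (3 * a n * |x - y|) :=
    (hf.norm_sub_le_lipConst_mul (hw hx) (hw hy)).trans (by gcongr; exact abs_w_sub_w_le ha x y)
  rw [Ln_sub_Ln]
  calc _ ≤ |vd a n x - vd a n y| * ‖f (v a n x) - f (w a n x)‖
          + vd a n y * ‖f (v a n x) - f (v a n y)‖ + wd a n y * ‖f (w a n x) - f (w a n y)‖ := by
        refine (norm_add₃_le).trans_eq ?_
        rw [norm_mul, norm_mul, norm_mul, Complex.norm_real, Complex.norm_real, Complex.norm_real,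
          Real.norm_eq_abs, Real.norm_of_nonneg hvd, Real.norm_of_nonneg hwd]
    _ ≤ 4 * Real.pi * (n : ℝ) ^ 4 * a n * |x - y| * (lipConst f * (5 * a n))
          + vd a n y * (lipConst f * (3 * a n * |x - y|))
          + wd a n y * (lipConst f * (3 * a n * |x - y|)) := by
        gcongr
        exact abs_vd_sub_vd_le ha x y
    _ = (20 * Real.pi * (n : ℝ) ^ 4 * a n ^ 2 + 3 * a n * (vd a n y + wd a n y)) * lipConst f
          * |x - y| := by ring
    _ = (20 * Real.pi * (n : ℝ) ^ 4 + 12) * a n ^ 2 * lipConst f * |x - y| := by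
        rw [vd_add_wd]; ring

lemma lipNorm_Ln_le (ha : 0 ≤ a n) (hv : MapsTo (v a n) (Ico 0 1) (Ico 0 1))
    (hw : MapsTo (w a n) (Ico 0 1) (Ico 0 1)) (hf : BddLip f) :
    lipNorm (Ln a n f) ≤ (4 * a n + (20 * Real.pi * (n : ℝ) ^ 4 + 12) * a n ^ 2) * lipNorm f := by
  have hS := supNorm_Ln_le ha hv hw hf
  have hL := lipConst_Ln_le ha hv hw hf
  have := supNorm_nonneg f
  have := lipConst_nonneg f
  have : 0 ≤ (20 * Real.pi * (n : ℝ) ^ 4 + 12) * a n ^ 2 := by positivity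
  rw [lipNorm, lipNorm]
  nlinarith

end TransferOperator

section CubicWeights

lemma aa_nonneg (n : ℕ) : 0 ≤ aa n := by
  unfold aa
  positivity

lemma aa_le (n : ℕ) : aa n ≤ 1 / 100 := by
  rcases Nat.eq_zero_or_pos n with rfl | hn
  · norm_num [aa]
  · have : (1 : ℝ) ≤ (n : ℝ) ^ 3 := one_le_pow₀ (by exact_mod_cast hn)
    unfold aa
    gcongr
    linarith

lemma hasSum_one_div_succ_sq :
    HasSum (fun n : ℕ => 1 / ((n : ℝ) + 1) ^ 2) (Real.pi ^ 2 / 6) := by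
  simpa using (hasSum_nat_add_iff' 1).mpr hasSum_zeta_two

lemma aa_succ_le (n : ℕ) : aa (n + 1) ≤ 1 / 100 * (1 / ((n : ℝ) + 1) ^ 2) := by
  have : ((n : ℝ) + 1) ^ 2 ≤ ((n : ℝ) + 1) ^ 3 :=
    pow_le_pow_right₀ (by linarith [n.cast_nonneg (α := ℝ)]) (by norm_num)
  rw [aa, one_div_mul_one_div]
  push_cast
  gcongr

lemma b_aa_le (n : ℕ) : b aa n ≤ 1 / 5 := by
  have hsum : ∑ k ∈ Finset.range n, aa (k + 1) ≤ 1 / 100 * (Real.pi ^ 2 / 6) :=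
    (Finset.sum_le_sum fun k _ => aa_succ_le k).trans
      (sum_le_hasSum _ (fun k _ => by positivity) (hasSum_one_div_succ_sq.mul_left _))
  have := Real.pi_le_four
  have := Real.pi_pos
  rw [b]
  nlinarith

lemma b_aa_add_five_aa_lt_one (n : ℕ) : b aa (n - 1) + 5 * aa n < 1 := by
  linarith [b_aa_le (n - 1), aa_le n]

lemma coeff_aa_succ_le (n : ℕ) :
    4 * aa (n + 1) + (20 * Real.pi * ((n + 1 : ℕ) : ℝ) ^ 4 + 12) * aa (n + 1) ^ 2
      ≤ 1 / 10 * (1 / ((n : ℝ) + 1) ^ 2) := by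
  have hm : (1 : ℝ) ≤ (n : ℝ) + 1 := by linarith [n.cast_nonneg (α := ℝ)]
  have := Real.pi_le_four
  rw [aa]
  push_cast
  set m := (n : ℝ) + 1
  have hinv : 0 ≤ 1 / m ^ 2 := by positivity
  calc 4 * (1 / (100 * m ^ 3)) + (20 * Real.pi * m ^ 4 + 12) * (1 / (100 * m ^ 3)) ^ 2
      = 4 / 100 * (1 / m ^ 3) + 20 * Real.pi / 10 ^ 4 * (1 / m ^ 2)
          + 12 / 10 ^ 4 * (1 / m ^ 6) := by
        field_simp
        ring
    _ ≤ 4 / 100 * (1 / m ^ 2) + 20 * 4 / 10 ^ 4 * (1 / m ^ 2) + 12 / 10 ^ 4 * (1 / m ^ 2) := by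
        gcongr <;> norm_num
    _ ≤ 1 / 10 * (1 / m ^ 2) := by linarith

end CubicWeights

/-- with `a_n = 1/(100 n³)`,
`∑_{n≥1} ‖L_n f‖_Lip ≤ (1/2) ‖f‖_Lip` for every bounded Lipschitz `f`. -/
theorem stmt8 (f : ℝ → ℂ) (hf : BddLip f) :
    Summable (fun n : ℕ => lipNorm (Ln aa (n + 1) f)) ∧
    (∑' n : ℕ, lipNorm (Ln aa (n + 1) f)) ≤ (1 / 2) * lipNorm f := by
  have hterm : ∀ n : ℕ, lipNorm (Ln aa (n + 1) f)
      ≤ lipNorm f / 10 * (1 / ((n : ℝ) + 1) ^ 2) := fun n =>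
    (lipNorm_Ln_le (aa_nonneg _) (mapsTo_v aa_nonneg (b_aa_add_five_aa_lt_one _))
      (mapsTo_w aa_nonneg (b_aa_add_five_aa_lt_one _)) hf).trans <| by
      nlinarith [coeff_aa_succ_le n, lipNorm_nonneg f]
  have hmajorant := hasSum_one_div_succ_sq.mul_left (lipNorm f / 10)
  have hsummable : Summable fun n : ℕ => lipNorm (Ln aa (n + 1) f) :=
    hmajorant.summable.of_nonneg_of_le (fun _ => lipNorm_nonneg _) hterm
  refine ⟨hsummable, (hasSum_le hterm hsummable.hasSum hmajorant).trans ?_⟩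
  have hzeta : Real.pi ^ 2 / 6 ≤ 5 := by nlinarith [Real.pi_le_four, Real.pi_pos]
  have := lipNorm_nonneg f
  calc lipNorm f / 10 * (Real.pi ^ 2 / 6) ≤ lipNorm f / 10 * 5 := by gcongr
    _ = 1 / 2 * lipNorm f := by ring

end Gouezel
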